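/- Contracting an edge of a graph does not increase its pseudo-tree-width: if H is obtained from a graph J by contracting an edge, then the pseudo-tree-width of H is at most the pseudo-tree-width of J. -/
import Mathlib


open SimpleGraph Set

/-- `φ` is an `(L,C)`-quasi-isometry from `G` to `H`. -/
def IsQuasiIsometry {V W : Type} (G : SimpleGraph V) (H : SimpleGraph W)
    (L C : ℕ) (φ : V → W) : Prop :=
  (∀ u v : V, G.edist u v ≠ ⊤ →
      H.edist (φ u) (φ v) ≤ L * G.edist u v + C) ∧
  (∀ u v : V, H.edist (φ u) (φ v) ≠ ⊤ →
      G.edist u v ≤ L * H.edist (φ u) (φ v) + C) ∧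
  (∀ y : W, ∃ v : V, H.edist (φ v) y ≤ C)

/-- `(T, B)` is a tree-decomposition of `G`. -/
structure IsTreeDecomp {V τ : Type} (G : SimpleGraph V) (T : SimpleGraph τ)
    (B : τ → Set V) : Prop where
  isTree : T.IsTree
  covers : ∀ v : V, ∃ t, v ∈ B t
  edges : ∀ u v : V, G.Adj u v → ∃ t, u ∈ B t ∧ v ∈ B t
  interp : ∀ t₁ t₂ t₃ : τ, ∀ p : T.Walk t₁ t₃, p.IsPath → t₂ ∈ p.support →
    B t₁ ∩ B t₃ ⊆ B t₂

/-- `(T, B)` is a pseudo-tree-decomposition of `G`. -/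
structure IsPseudoTreeDecomp {V τ : Type} (G : SimpleGraph V) (T : SimpleGraph τ)
    (B : τ → Set V) : Prop where
  isTree : T.IsTree
  covers : ∀ v : V, ∃ t, v ∈ B t
  edges : ∀ u v : V, G.Adj u v → (∃ t, u ∈ B t ∧ v ∈ B t) ∨
    (∃ s t, T.Adj s t ∧ B s \ B t = {u} ∧ B t \ B s = {v})
  interp : ∀ t₁ t₂ t₃ : τ, ∀ p : T.Walk t₁ t₃, p.IsPath → t₂ ∈ p.support →
    B t₁ ∩ B t₃ ⊆ B t₂

/-- `(B 0, …, B (n-1))` is a pseudo-path-decomposition of `G`. -/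
structure IsPseudoPathDecomp {V : Type} (G : SimpleGraph V) {n : ℕ}
    (B : Fin n → Set V) : Prop where
  covers : ∀ v : V, ∃ i, v ∈ B i
  edges : ∀ u v : V, G.Adj u v → (∃ i, u ∈ B i ∧ v ∈ B i) ∨
    (∃ i : Fin n, ∃ hi : i.1 + 1 < n,
      B i \ B ⟨i.1 + 1, hi⟩ = {u} ∧ B ⟨i.1 + 1, hi⟩ \ B i = {v})
  interp : ∀ i j l : Fin n, i ≤ j → j ≤ l → B i ∩ B l ⊆ B j

/-- `(B 0, …, B (n-1))` is a path-decomposition of `G`. -/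
structure IsPathDecomp {V : Type} (G : SimpleGraph V) {n : ℕ}
    (B : Fin n → Set V) : Prop where
  covers : ∀ v : V, ∃ i, v ∈ B i
  edges : ∀ u v : V, G.Adj u v → ∃ i, u ∈ B i ∧ v ∈ B i
  interp : ∀ i j l : Fin n, i ≤ j → j ≤ l → B i ∩ B l ⊆ B j

/-- `G` has a tree-decomposition in which every bag has at most `k` vertices
(i.e. tree-width at most `k - 1`). -/
def TreewidthBagLE {V : Type} (G : SimpleGraph V) (k : ℕ) : Prop :=
  ∃ (τ : Type) (T : SimpleGraph τ) (B : τ → Set V),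
    IsTreeDecomp G T B ∧ ∀ t, (B t).encard ≤ k

/-- `G` has a pseudo-tree-decomposition in which every bag has at most `k` vertices
(i.e. pseudo-tree-width at most `k - 1`). -/
def PseudoTreewidthBagLE {V : Type} (G : SimpleGraph V) (k : ℕ) : Prop :=
  ∃ (τ : Type) (T : SimpleGraph τ) (B : τ → Set V),
    IsPseudoTreeDecomp G T B ∧ ∀ t, (B t).encard ≤ k

lemma tree_path_support_subset {τ : Type} {T : SimpleGraph τ} (hT : T.IsTree) {a b c : τ}
    (p : T.Walk a b) (hp : p.IsPath) (q : T.Walk a b) (hc : c ∈ p.support) :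
    c ∈ q.support := by
  classical
  obtain ⟨r, _, hun⟩ := hT.existsUnique_path a b
  have hpq : p = q.bypass := (hun p hp).trans (hun q.bypass q.bypass_isPath).symm
  exact q.support_bypass_subset (hpq ▸ hc)

theorem stmt12 {V : Type} (J : SimpleGraph V) (u v : V) (huv : J.Adj u v)
    (H : SimpleGraph {x : V // x ≠ v})
    (hH : H = SimpleGraph.fromRel (fun a b =>
      J.Adj a.1 b.1 ∨ (a.1 = u ∧ J.Adj v b.1) ∨ (b.1 = u ∧ J.Adj a.1 v)))
    (k : ℕ) (hJ : PseudoTreewidthBagLE J k) :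
    PseudoTreewidthBagLE H k := by
  classical
  obtain ⟨τ, T, B, hdec, hsize⟩ := hJ
  have hune : u ≠ v := huv.ne
  set π : V → {x : V // x ≠ v} := fun w => if h : w = v then ⟨u, hune⟩ else ⟨w, h⟩ with hπ
  set B' : τ → Set {x : V // x ≠ v} := fun t => π '' B t with hB'
  have memB' : ∀ (t : τ) (x : {x : V // x ≠ v}),
      x ∈ B' t ↔ (x.1 ∈ B t ∨ (x.1 = u ∧ v ∈ B t)) := by
    intro t x
    constructor
    · rintro ⟨w, hw, rfl⟩
      by_cases h : w = v
      · right
        refine ⟨?_, h ▸ hw⟩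
        simp only [hπ]
        rw [dif_pos h]
      · left
        simpa only [hπ, dif_neg h] using hw
    · rintro (hx | ⟨hxu, hv⟩)
      · refine ⟨x.1, hx, ?_⟩
        simp only [hπ]
        rw [dif_neg x.2]
      · refine ⟨v, hv, ?_⟩
        simp only [hπ, dif_pos]
        exact Subtype.ext hxu.symm
  -- key lemma : the set of bags containing u or v is path-connected, given the uv edge
  have key : ∀ t₁ t₂ t₃ : τ, ∀ p : T.Walk t₁ t₃, p.IsPath → t₂ ∈ p.support →
      (u ∈ B t₁ ∨ v ∈ B t₁) → (u ∈ B t₃ ∨ v ∈ B t₃) → (u ∈ B t₂ ∨ v ∈ B t₂) := by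
    intro t₁ t₂ t₃ p hp ht₂ h1 h3
    -- reduce to : there exist s t with u ∈ B s, v ∈ B t, and a walk s → t
    -- whose interior support supports u or v
    have main : ∀ (t₁' t₃' : τ) (p' : T.Walk t₁' t₃'), p'.IsPath → t₂ ∈ p'.support →
        ∀ (s t : τ) (q : T.Walk s t),
        u ∈ B s → v ∈ B t → (∀ r ∈ q.support, u ∈ B r ∨ v ∈ B r) →
        u ∈ B t₁' → v ∈ B t₃' → (u ∈ B t₂ ∨ v ∈ B t₂) := by
      intro t₁ t₃ p hp ht₂ s t q hus hvt hq hu1 hv3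
      obtain ⟨w1⟩ := hdec.isTree.isConnected.preconnected t₁ s
      obtain ⟨w2⟩ := hdec.isTree.isConnected.preconnected t t₃
      have := tree_path_support_subset hdec.isTree p hp
        (w1.bypass.append (q.append w2.bypass)) ht₂
      rw [SimpleGraph.Walk.mem_support_append_iff] at this
      rcases this with h | h
      · exact Or.inl (hdec.interp t₁ t₂ s w1.bypass w1.bypass_isPath h ⟨hu1, hus⟩)
      rw [SimpleGraph.Walk.mem_support_append_iff] at h
      rcases h with h | h
      · exact hq _ h
      · exact Or.inr (hdec.interp t t₂ t₃ w2.bypass w2.bypass_isPath h ⟨hvt, hv3⟩)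
    -- get the link between u-bags and v-bags from the edge uv
    have link : ∀ (t₁' t₃' : τ) (p' : T.Walk t₁' t₃'), p'.IsPath → t₂ ∈ p'.support →
        u ∈ B t₁' → v ∈ B t₃' → (u ∈ B t₂ ∨ v ∈ B t₂) := by
      intro t₁' t₃' p' hp' ht₂' hu1 hv3
      rcases hdec.edges u v huv with ⟨r, hur, hvr⟩ | ⟨s, t, hst, hs, ht⟩
      · exact main t₁' t₃' p' hp' ht₂' r r SimpleGraph.Walk.nil hur hvr
          (by intro x hx; simp at hx; subst hx; exact Or.inl hur) hu1 hv3
      · have hus : u ∈ B s := by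
          have : u ∈ B s \ B t := by rw [hs]; exact rfl
          exact this.1
        have hvt : v ∈ B t := by
          have : v ∈ B t \ B s := by rw [ht]; exact rfl
          exact this.1
        refine main t₁' t₃' p' hp' ht₂' s t (SimpleGraph.Walk.cons hst SimpleGraph.Walk.nil) hus hvt ?_ hu1 hv3
        intro x hx
        simp only [SimpleGraph.Walk.support_cons, SimpleGraph.Walk.support_nil,
          List.mem_cons, List.mem_singleton] at hx
        rcases hx with rfl | (rfl | h)
        · exact Or.inl hus
        · exact Or.inr hvt
        · exact absurd h (by simp)
    rcases h1 with hu1 | hv1 <;> rcases h3 with hu3 | hv3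
    · exact Or.inl (hdec.interp t₁ t₂ t₃ p hp ht₂ ⟨hu1, hu3⟩)
    · exact link t₁ t₃ p hp ht₂ hu1 hv3
    · rcases link t₃ t₁ p.reverse hp.reverse
        (by rw [SimpleGraph.Walk.support_reverse, List.mem_reverse]; exact ht₂) hu3 hv1 with h | h
      · exact Or.inl h
      · exact Or.inr h
    · exact Or.inr (hdec.interp t₁ t₂ t₃ p hp ht₂ ⟨hv1, hv3⟩)
  refine ⟨τ, T, B', ⟨hdec.isTree, ?_, ?_, ?_⟩, ?_⟩
  · -- covers
    intro x
    obtain ⟨t, ht⟩ := hdec.covers x.1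
    exact ⟨t, (memB' t x).2 (Or.inl ht)⟩
  · -- edges
    intro a b hab
    rw [hH, SimpleGraph.fromRel_adj] at hab
    obtain ⟨hne, hrel⟩ := hab
    -- normalize the relation to three symmetric-friendly cases
    have hcases : J.Adj a.1 b.1 ∨ (a.1 = u ∧ J.Adj v b.1) ∨ (b.1 = u ∧ J.Adj a.1 v) := by
      rcases hrel with h | h
      · exact h
      · rcases h with h | ⟨h1, h2⟩ | ⟨h1, h2⟩
        · exact Or.inl h.symm
        · exact Or.inr (Or.inr ⟨h1, h2.symm⟩)
        · exact Or.inr (Or.inl ⟨h1, h2.symm⟩)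
    rcases hcases with hJab | ⟨hau, hvb⟩ | ⟨hbu, hav⟩
    · -- case 1 : J.Adj a b
      rcases hdec.edges a.1 b.1 hJab with ⟨t, hat, hbt⟩ | ⟨s, t, hst, hs, ht⟩
      · exact Or.inl ⟨t, (memB' t a).2 (Or.inl hat), (memB' t b).2 (Or.inl hbt)⟩
      have has : a.1 ∈ B s ∧ a.1 ∉ B t := by
        have : a.1 ∈ B s \ B t := hs.ge rfl
        exact ⟨this.1, this.2⟩
      have hbt' : b.1 ∈ B t ∧ b.1 ∉ B s := by
        have : b.1 ∈ B t \ B s := ht.ge rfl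
        exact ⟨this.1, this.2⟩
      have hvst : v ∈ B s ↔ v ∈ B t := by
        constructor
        · intro h
          by_contra h'
          have : v ∈ B s \ B t := ⟨h, h'⟩
          rw [hs] at this
          exact a.2 (Eq.symm this)
        · intro h
          by_contra h'
          have : v ∈ B t \ B s := ⟨h, h'⟩
          rw [ht] at this
          exact b.2 (Eq.symm this)
      by_cases hA : a.1 = u ∧ v ∈ B t
      · exact Or.inl ⟨t, (memB' t a).2 (Or.inr hA), (memB' t b).2 (Or.inl hbt'.1)⟩
      by_cases hB : b.1 = u ∧ v ∈ B s
      · exact Or.inl ⟨s, (memB' s a).2 (Or.inl has.1), (memB' s b).2 (Or.inr hB)⟩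
      refine Or.inr ⟨s, t, hst, ?_, ?_⟩
      · ext x
        simp only [Set.mem_diff, memB', Set.mem_singleton_iff]
        constructor
        · rintro ⟨hx1, hx2⟩
          push_neg at hx2
          rcases hx1 with hx | ⟨hxu, hvs⟩
          · have : x.1 ∈ B s \ B t := ⟨hx, hx2.1⟩
            rw [hs] at this
            exact Subtype.ext this
          · exact absurd (hvst.1 hvs) (hx2.2 hxu)
        · rintro rfl
          refine ⟨Or.inl has.1, ?_⟩
          push_neg
          exact ⟨has.2, fun h1 h2 => hA ⟨h1, h2⟩⟩
      · ext x
        simp only [Set.mem_diff, memB', Set.mem_singleton_iff]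
        constructor
        · rintro ⟨hx1, hx2⟩
          push_neg at hx2
          rcases hx1 with hx | ⟨hxu, hvt⟩
          · have : x.1 ∈ B t \ B s := ⟨hx, hx2.1⟩
            rw [ht] at this
            exact Subtype.ext this
          · exact absurd (hvst.2 hvt) (hx2.2 hxu)
        · rintro rfl
          refine ⟨Or.inl hbt'.1, ?_⟩
          push_neg
          exact ⟨hbt'.2, fun h1 h2 => hB ⟨h1, h2⟩⟩
    · -- case 2 : a.1 = u, J.Adj v b.1
      rcases hdec.edges v b.1 hvb with ⟨t, hvt, hbt⟩ | ⟨s, t, hst, hs, ht⟩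
      · exact Or.inl ⟨t, (memB' t a).2 (Or.inr ⟨hau, hvt⟩), (memB' t b).2 (Or.inl hbt)⟩
      have hvs : v ∈ B s ∧ v ∉ B t := by
        have : v ∈ B s \ B t := hs.ge rfl
        exact ⟨this.1, this.2⟩
      have hbt' : b.1 ∈ B t ∧ b.1 ∉ B s := by
        have : b.1 ∈ B t \ B s := ht.ge rfl
        exact ⟨this.1, this.2⟩
      have hbu : b.1 ≠ u := by
        intro h
        exact hne (Subtype.ext (hau.trans h.symm))
      by_cases hus : u ∈ B s
      · -- then u ∈ B t as well, so bag t contains both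
        have hut : u ∈ B t := by
          by_contra h'
          have : u ∈ B s \ B t := ⟨hus, h'⟩
          rw [hs] at this
          exact hune this
        exact Or.inl ⟨t, (memB' t a).2 (Or.inl (hau ▸ hut)),
          (memB' t b).2 (Or.inl hbt'.1)⟩
      have hut : u ∉ B t := by
        intro h'
        have : u ∈ B t \ B s := ⟨h', hus⟩
        rw [ht] at this
        exact hbu this.symm
      refine Or.inr ⟨s, t, hst, ?_, ?_⟩
      · ext x
        simp only [Set.mem_diff, memB', Set.mem_singleton_iff]
        constructor
        · rintro ⟨hx1, hx2⟩
          push_neg at hx2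
          rcases hx1 with hx | ⟨hxu, hvs'⟩
          · have : x.1 ∈ B s \ B t := ⟨hx, hx2.1⟩
            rw [hs] at this
            exact absurd this x.2
          · exact Subtype.ext (hxu.trans hau.symm)
        · rintro rfl
          rw [hau]
          refine ⟨Or.inr ⟨rfl, hvs.1⟩, ?_⟩
          push_neg
          exact ⟨hut, fun _ => hvs.2⟩
      · ext x
        simp only [Set.mem_diff, memB', Set.mem_singleton_iff]
        constructor
        · rintro ⟨hx1, hx2⟩
          push_neg at hx2
          rcases hx1 with hx | ⟨hxu, hvt'⟩
          · have : x.1 ∈ B t \ B s := ⟨hx, hx2.1⟩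
            rw [ht] at this
            exact Subtype.ext this
          · exact absurd hvt' hvs.2
        · rintro rfl
          refine ⟨Or.inl hbt'.1, ?_⟩
          push_neg
          exact ⟨hbt'.2, fun h1 => absurd h1 hbu⟩
    · -- case 3 : b.1 = u, J.Adj a.1 v ; symmetric to case 2
      rcases hdec.edges a.1 v hav with ⟨t, hat, hvt⟩ | ⟨s, t, hst, hs, ht⟩
      · exact Or.inl ⟨t, (memB' t a).2 (Or.inl hat), (memB' t b).2 (Or.inr ⟨hbu, hvt⟩)⟩
      have has : a.1 ∈ B s ∧ a.1 ∉ B t := by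
        have : a.1 ∈ B s \ B t := hs.ge rfl
        exact ⟨this.1, this.2⟩
      have hvt' : v ∈ B t ∧ v ∉ B s := by
        have : v ∈ B t \ B s := ht.ge rfl
        exact ⟨this.1, this.2⟩
      have hau' : a.1 ≠ u := by
        intro h
        exact hne (Subtype.ext (h.trans hbu.symm))
      by_cases hut : u ∈ B t
      · have hus : u ∈ B s := by
          by_contra h'
          have : u ∈ B t \ B s := ⟨hut, h'⟩
          rw [ht] at this
          exact hune this
        exact Or.inl ⟨s, (memB' s a).2 (Or.inl has.1),
          (memB' s b).2 (Or.inl (hbu ▸ hus))⟩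
      have hus : u ∉ B s := by
        intro h'
        have : u ∈ B s \ B t := ⟨h', hut⟩
        rw [hs] at this
        exact hau' this.symm
      refine Or.inr ⟨s, t, hst, ?_, ?_⟩
      · ext x
        simp only [Set.mem_diff, memB', Set.mem_singleton_iff]
        constructor
        · rintro ⟨hx1, hx2⟩
          push_neg at hx2
          rcases hx1 with hx | ⟨hxu, hvs'⟩
          · have : x.1 ∈ B s \ B t := ⟨hx, hx2.1⟩
            rw [hs] at this
            exact Subtype.ext this
          · exact absurd hvs' hvt'.2
        · rintro rfl
          refine ⟨Or.inl has.1, ?_⟩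
          push_neg
          exact ⟨has.2, fun h1 => absurd h1 hau'⟩
      · ext x
        simp only [Set.mem_diff, memB', Set.mem_singleton_iff]
        constructor
        · rintro ⟨hx1, hx2⟩
          push_neg at hx2
          rcases hx1 with hx | ⟨hxu, hvt''⟩
          · have : x.1 ∈ B t \ B s := ⟨hx, hx2.1⟩
            rw [ht] at this
            exact absurd this x.2
          · exact Subtype.ext (hxu.trans hbu.symm)
        · rintro rfl
          rw [hbu]
          refine ⟨Or.inr ⟨rfl, hvt'.1⟩, ?_⟩
          push_neg
          exact ⟨hus, fun _ => hvt'.2⟩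
  · -- interp
    intro t₁ t₂ t₃ p hp ht₂ x hx
    obtain ⟨hx1, hx3⟩ := hx
    rw [memB'] at hx1 hx3
    rw [memB']
    rcases hx1 with hx1 | ⟨hxu, hv1⟩ <;> rcases hx3 with hx3 | ⟨hxu', hv3⟩
    · exact Or.inl (hdec.interp t₁ t₂ t₃ p hp ht₂ ⟨hx1, hx3⟩)
    · subst hxu'
      rcases key t₁ t₂ t₃ p hp ht₂ (Or.inl hx1) (Or.inr hv3) with h | h
      · exact Or.inl h
      · exact Or.inr ⟨rfl, h⟩
    · subst hxu
      rcases key t₁ t₂ t₃ p hp ht₂ (Or.inr hv1) (Or.inl hx3) with h | h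
      · exact Or.inl h
      · exact Or.inr ⟨rfl, h⟩
    · exact Or.inr ⟨hxu, hdec.interp t₁ t₂ t₃ p hp ht₂ ⟨hv1, hv3⟩⟩
  · -- size
    intro t
    exact le_trans (Set.encard_image_le π (B t)) (hsize t)
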